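/- Let (G,m,w,B) be a connected weighted finite graph with boundary. Then for every i = 1, 2, …, |Ω|: μ_i(Ω) + min_{x∈Ω} Deg_b(x) ≤ λ_i ≤ μ_i(Ω) + max_{x∈Ω} Deg_b(x). -/

import Mathlib

open Finset

noncomputable section

/-- The weighted graph Laplacian `Δ`. -/
def glap {V : Type*} [Fintype V] (m : V → ℝ) (w : V → V → ℝ) (u : V → ℝ) (x : V) : ℝ :=
  (1 / m x) * ∑ y, (u y - u x) * w x y

/-- Extension by zero to the boundary. -/
def E0 {V : Type*} [DecidableEq V] (B : Finset V) (u : {x : V // x ∉ B} → ℝ) (x : V) : ℝ :=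
  if h : x ∈ B then 0 else u ⟨x, h⟩

/-- The normal extension. -/
def N0 {V : Type*} [Fintype V] [DecidableEq V] (w : V → V → ℝ) (B : Finset V)
    (u : {x : V // x ∉ B} → ℝ) (x : V) : ℝ :=
  if h : x ∈ B then
    (∑ y : {x : V // x ∉ B}, u y * w x y.1) / (∑ y : {x : V // x ∉ B}, w x y.1)
  else u ⟨x, h⟩

/-- The Dirichlet Laplacian `Δ^D`. -/
def dlap {V : Type*} [Fintype V] [DecidableEq V] (m : V → ℝ) (w : V → V → ℝ) (B : Finset V)
    (u : {x : V // x ∉ B} → ℝ) (x : {x : V // x ∉ B}) : ℝ :=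
  glap m w (E0 B u) x.1

/-- The Neumann Laplacian `Δ^N`. -/
def nlap {V : Type*} [Fintype V] [DecidableEq V] (m : V → ℝ) (w : V → V → ℝ) (B : Finset V)
    (u : {x : V // x ∉ B} → ℝ) (x : {x : V // x ∉ B}) : ℝ :=
  glap m w (N0 w B u) x.1

/-- The Laplacian `Δ_Ω` of the induced interior subgraph. -/
def olap {V : Type*} [Fintype V] [DecidableEq V] (m : V → ℝ) (w : V → V → ℝ) (B : Finset V)
    (u : {x : V // x ∉ B} → ℝ) (x : {x : V // x ∉ B}) : ℝ :=
  (1 / m x.1) * ∑ y : {x : V // x ∉ B}, (u y - u x) * w x.1 y.1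

/-- The weighted boundary vertex degree `Deg_b`. -/
def degb {V : Type*} [DecidableEq V] (m : V → ℝ) (w : V → V → ℝ) (B : Finset V) (x : V) : ℝ :=
  (1 / m x) * ∑ y ∈ B, w x y

/-- The operator `T = A_B ∘ Deg⁻¹ ∘ A_Ω`. -/
def bop {V : Type*} [Fintype V] [DecidableEq V] (m : V → ℝ) (w : V → V → ℝ) (B : Finset V)
    (u : {x : V // x ∉ B} → ℝ) (z : {x : V // x ∉ B}) : ℝ :=
  (1 / m z.1) * ∑ x ∈ B, w x z.1 *
    ((∑ y : {x : V // x ∉ B}, u y * w x y.1) / (∑ y : {x : V // x ∉ B}, w x y.1))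

/-- The Bakry–Émery `Γ` operator of a Laplacian-type operator `L`. -/
def gam {W : Type*} (L : (W → ℝ) → (W → ℝ)) (f g : W → ℝ) (x : W) : ℝ :=
  (L (fun y => f y * g y) x - f x * L g x - g x * L f x) / 2

/-- The Bakry–Émery `Γ₂` operator of a Laplacian-type operator `L`. -/
def gam2 {W : Type*} (L : (W → ℝ) → (W → ℝ)) (f : W → ℝ) (x : W) : ℝ :=
  L (gam L f f) x / 2 - gam L f (L f) x

/-- `e` is a complete list of the eigenvalues of `L` : there is a corresponding eigenbasis
which is orthonormal with respect to the inner product weighted by `m`. -/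
def IsEigenBasis {n : ℕ} {W : Type*} [Fintype W] (m : W → ℝ)
    (L : (W → ℝ) → (W → ℝ)) (e : Fin n → ℝ) : Prop :=
  ∃ φ : Fin n → W → ℝ,
    (∀ i j, (∑ x, φ i x * φ j x * m x) = if i = j then 1 else 0) ∧
    ∀ i, L (φ i) = fun x => e i * φ i x

/-!
The Dirichlet Laplacian differs from the interior Laplacian by a multiplication operator:
`Δ^D u = Δ_Ω u - Deg_b · u` on `Ω`. Hence the two quadratic forms differ by `∑ Deg_b u² m`, which
lies between `min Deg_b ‖u‖²` and `max Deg_b ‖u‖²`, and Weyl's comparison principle turns a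
comparison of quadratic forms into the same comparison of ordered eigenvalues. That principle
is the Courant–Fischer dimension count: a nonzero combination of the first `i + 1`
eigenvectors of one operator, orthogonal to the first `i` eigenvectors of the other, has
Rayleigh quotient at most the `i`-th eigenvalue of the first operator and at least the `i`-th
eigenvalue of the second.
-/

section WeightedInner

variable {W : Type*} [Fintype W]

def wInner (m f g : W → ℝ) : ℝ := ∑ x, f x * g x * m x

def IsWOrthonormal {ι : Type*} [DecidableEq ι] (m : W → ℝ) (φ : ι → W → ℝ) : Prop :=
  ∀ i j, wInner m (φ i) (φ j) = if i = j then 1 else 0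

lemma wInner_comm (m f g : W → ℝ) : wInner m f g = wInner m g f := by
  simp only [wInner, mul_comm (f _)]

lemma wInner_sum_smul_left {ι : Type*} [Fintype ι] (m g : W → ℝ) (c : ι → ℝ)
    (φ : ι → W → ℝ) : wInner m (∑ l, c l • φ l) g = ∑ l, c l * wInner m (φ l) g := by
  simp only [wInner, Finset.sum_apply, Pi.smul_apply, smul_eq_mul, Finset.sum_mul, Finset.mul_sum]
  rw [Finset.sum_comm]
  exact sum_congr rfl fun _ _ => sum_congr rfl fun _ _ => by ring

lemma exists_ne_zero_wInner_sum_smul_eq_zero {ι κ : Type*} [Fintype ι] [Fintype κ]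
    (m : W → ℝ) (φ : ι → W → ℝ) (ψ : κ → W → ℝ) (hcard : Fintype.card κ < Fintype.card ι) :
    ∃ c : ι → ℝ, c ≠ 0 ∧ ∀ j, wInner m (∑ l, c l • φ l) (ψ j) = 0 := by
  let M : Matrix κ ι ℝ := Matrix.of fun j l => wInner m (φ l) (ψ j)
  have hker : LinearMap.ker M.mulVecLin ≠ ⊥ :=
    LinearMap.ker_ne_bot_of_finrank_lt (by simpa using hcard)
  obtain ⟨c, hc, hc0⟩ := Submodule.exists_mem_ne_zero_of_ne_bot hker
  refine ⟨c, hc0, fun j => ?_⟩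
  rw [wInner_sum_smul_left]
  simpa [M, Matrix.mulVec, dotProduct, mul_comm] using congrFun (LinearMap.mem_ker.1 hc) j

namespace IsWOrthonormal

variable {ι : Type*} [DecidableEq ι] {m : W → ℝ} {φ : ι → W → ℝ}

lemma comp_injective {κ : Type*} [DecidableEq κ] (hφ : IsWOrthonormal m φ) {f : κ → ι}
    (hf : Function.Injective f) : IsWOrthonormal m (φ ∘ f) := fun i j => by
  simp [hφ (f i) (f j), hf.eq_iff]

variable [Fintype ι]

lemma wInner_sum_smul_left (hφ : IsWOrthonormal m φ) (c : ι → ℝ) (j : ι) :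
    wInner m (∑ l, c l • φ l) (φ j) = c j := by
  simp [_root_.wInner_sum_smul_left, hφ _ j]

lemma wInner_sum_smul (hφ : IsWOrthonormal m φ) (c d : ι → ℝ) :
    wInner m (∑ l, c l • φ l) (∑ l, d l • φ l) = ∑ l, c l * d l := by
  simp only [_root_.wInner_sum_smul_left, wInner_comm m (φ _), hφ.wInner_sum_smul_left]

lemma linearIndependent (hφ : IsWOrthonormal m φ) : LinearIndependent ℝ φ :=
  Fintype.linearIndependent_iff.2 fun c hc j => by
    have hcj := hφ.wInner_sum_smul_left c j
    rw [hc] at hcj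
    simpa [wInner] using hcj.symm

lemma exists_eq_sum_smul (hφ : IsWOrthonormal m φ) (hcard : Fintype.card ι = Fintype.card W)
    (u : W → ℝ) : ∃ c : ι → ℝ, ∑ l, c l • φ l = u := by
  have hspan := hφ.linearIndependent.span_eq_top_of_card_eq_finrank' (by simpa using hcard)
  exact (Submodule.mem_span_range_iff_exists_fun ℝ).1 (hspan ▸ Submodule.mem_top)

lemma wInner_neg_apply_sum_smul (hφ : IsWOrthonormal m φ) (L : (W → ℝ) →ₗ[ℝ] (W → ℝ))
    {a : ι → ℝ} (hLφ : ∀ l, L (φ l) = fun x => -a l * φ l x) (c : ι → ℝ) :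
    wInner m (-L (∑ l, c l • φ l)) (∑ l, c l • φ l) = ∑ l, a l * c l ^ 2 := by
  have hL : -L (∑ l, c l • φ l) = ∑ l, (a l * c l) • φ l := by
    ext x
    simp only [map_sum, map_smul, hLφ, neg_mul, Pi.neg_apply, Finset.sum_apply, Pi.smul_apply,
      smul_eq_mul, mul_neg, ← sum_neg_distrib, neg_neg]
    exact sum_congr rfl fun _ _ => by ring
  rw [hL, hφ.wInner_sum_smul]
  exact sum_congr rfl fun _ _ => by ring

end IsWOrthonormal

end WeightedInner

theorem le_add_of_wInner_neg_le {W : Type*} [Fintype W] {m : W → ℝ}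
    (L₁ L₂ : (W → ℝ) →ₗ[ℝ] (W → ℝ)) {a b : Fin (Fintype.card W) → ℝ}
    (ha : Monotone a) (hb : Monotone b)
    (hL₁ : IsEigenBasis m L₁ fun i => -a i) (hL₂ : IsEigenBasis m L₂ fun i => -b i) {c : ℝ}
    (hform : ∀ u, wInner m (-L₁ u) u ≤ wInner m (-L₂ u) u + c * wInner m u u)
    (i : Fin (Fintype.card W)) : a i ≤ b i + c := by
  obtain ⟨ψ, hψ, hL₁ψ⟩ := hL₁
  obtain ⟨φ, hφ, hL₂φ⟩ := hL₂
  replace hψ : IsWOrthonormal m ψ := hψ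
  have hφ' : IsWOrthonormal m (φ ∘ Fin.castLE i.isLt) :=
    IsWOrthonormal.comp_injective hφ (Fin.castLE_injective _)
  obtain ⟨e, he0, horth⟩ := exists_ne_zero_wInner_sum_smul_eq_zero m (φ ∘ Fin.castLE i.isLt)
    (ψ ∘ Fin.castLE i.isLt.le) (by simp)
  set u := ∑ l, e l • (φ ∘ Fin.castLE i.isLt) l
  have hnorm : 0 < wInner m u u := by
    rw [hφ'.wInner_sum_smul]
    obtain ⟨l, hl⟩ := Function.ne_iff.1 he0
    exact Finset.sum_pos' (fun l _ => mul_self_nonneg _) ⟨l, mem_univ _, mul_self_pos.2 hl⟩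
  have hupper : wInner m (-L₂ u) u ≤ b i * wInner m u u := by
    rw [hφ'.wInner_neg_apply_sum_smul L₂ (fun l => hL₂φ _), hφ'.wInner_sum_smul, mul_sum]
    refine sum_le_sum fun l _ => ?_
    rw [← sq]
    exact mul_le_mul_of_nonneg_right (hb (Fin.le_def.2 (Nat.le_of_lt_succ l.isLt))) (sq_nonneg _)
  obtain ⟨d, hd⟩ := hψ.exists_eq_sum_smul (Fintype.card_fin _) u
  have hlower : a i * wInner m u u ≤ wInner m (-L₁ u) u := by
    rw [← hd, hψ.wInner_neg_apply_sum_smul L₁ hL₁ψ, hψ.wInner_sum_smul, mul_sum]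
    refine sum_le_sum fun j _ => ?_
    rw [← sq]
    rcases lt_or_ge j i with hji | hij
    · have hdj : d j = 0 := by
        rw [← hψ.wInner_sum_smul_left d j, hd]
        exact horth ⟨j, hji⟩
      simp [hdj]
    · exact mul_le_mul_of_nonneg_right (ha hij) (sq_nonneg _)
  have hscaled : a i * wInner m u u ≤ (b i + c) * wInner m u u := by linarith [hform u]
  exact le_of_mul_le_mul_right hscaled hnorm

lemma sum_mul_le_ciSup_mul_sum {ι : Type*} [Fintype ι] (f g : ι → ℝ) (hg : ∀ i, 0 ≤ g i) :
    ∑ i, f i * g i ≤ (⨆ i, f i) * ∑ i, g i := by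
  rw [mul_sum]
  exact sum_le_sum fun i _ =>
    mul_le_mul_of_nonneg_right (le_ciSup (Set.finite_range f).bddAbove i) (hg i)

lemma ciInf_mul_sum_le_sum_mul {ι : Type*} [Fintype ι] (f g : ι → ℝ) (hg : ∀ i, 0 ≤ g i) :
    (⨅ i, f i) * ∑ i, g i ≤ ∑ i, f i * g i := by
  rw [mul_sum]
  exact sum_le_sum fun i _ =>
    mul_le_mul_of_nonneg_right (ciInf_le (Set.finite_range f).bddBelow i) (hg i)

section DirichletLaplacian

variable {V : Type*} [Fintype V] [DecidableEq V] (m : V → ℝ) (w : V → V → ℝ) (B : Finset V)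

def olapLin : ({x : V // x ∉ B} → ℝ) →ₗ[ℝ] ({x : V // x ∉ B} → ℝ) where
  toFun := olap m w B
  map_add' u v := by
    ext x
    simp only [olap, Pi.add_apply, ← mul_add, ← sum_add_distrib]
    exact congrArg _ (sum_congr rfl fun _ _ => by ring)
  map_smul' t u := by
    ext x
    simp only [olap, Pi.smul_apply, smul_eq_mul, RingHom.id_apply, mul_sum]
    exact sum_congr rfl fun _ _ => by ring

lemma dlap_eq_olap_sub (u : {x : V // x ∉ B} → ℝ) (x : {x : V // x ∉ B}) :
    dlap m w B u x = olap m w B u x - degb m w B x.1 * u x := by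
  have hE0 : E0 B u x.1 = u x := by simp [E0, x.2]
  have hB : ∑ y ∈ B, (E0 B u y - u x) * w x.1 y = -u x * ∑ y ∈ B, w x.1 y := by
    rw [mul_sum]
    exact sum_congr rfl fun y hy => by simp [E0, hy]
  have hΩ : ∑ y ∈ Bᶜ, (E0 B u y - u x) * w x.1 y
      = ∑ y : {x : V // x ∉ B}, (u y - u x) * w x.1 y.1 := by
    rw [sum_subtype Bᶜ fun _ => mem_compl]
    exact sum_congr rfl fun y _ => by simp [E0, y.2]
  simp only [dlap, glap, hE0, ← sum_add_sum_compl B, hB, hΩ, olap, degb]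
  ring

def dlapLin : ({x : V // x ∉ B} → ℝ) →ₗ[ℝ] ({x : V // x ∉ B} → ℝ) where
  toFun := dlap m w B
  map_add' u v := by
    ext x
    simp only [dlap_eq_olap_sub, Pi.add_apply]
    rw [show olap m w B (u + v) x = olap m w B u x + olap m w B v x from
      congrFun ((olapLin m w B).map_add u v) x]
    ring
  map_smul' t u := by
    ext x
    simp only [dlap_eq_olap_sub, Pi.smul_apply, smul_eq_mul, RingHom.id_apply]
    rw [show olap m w B (t • u) x = t * olap m w B u x from
      congrFun ((olapLin m w B).map_smul t u) x]
    ring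

lemma wInner_neg_dlap (u : {x : V // x ∉ B} → ℝ) :
    wInner (fun x => m x.1) (-dlap m w B u) u
      = wInner (fun x => m x.1) (-olap m w B u) u + ∑ x, degb m w B x.1 * (u x * u x * m x.1) := by
  simp only [wInner, Pi.neg_apply, dlap_eq_olap_sub, ← sum_add_distrib]
  exact sum_congr rfl fun _ _ => by ring

variable {m}

lemma wInner_neg_dlap_le (hm : ∀ x, 0 ≤ m x) (u : {x : V // x ∉ B} → ℝ) :
    wInner (fun x => m x.1) (-dlap m w B u) u ≤ wInner (fun x => m x.1) (-olap m w B u) u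
      + (⨆ x : {x : V // x ∉ B}, degb m w B x.1) * wInner (fun x => m x.1) u u := by
  rw [wInner_neg_dlap]
  exact (add_le_add_iff_left _).2
    (sum_mul_le_ciSup_mul_sum _ _ fun x => mul_nonneg (mul_self_nonneg _) (hm x.1))

lemma wInner_neg_olap_le (hm : ∀ x, 0 ≤ m x) (u : {x : V // x ∉ B} → ℝ) :
    wInner (fun x => m x.1) (-olap m w B u) u ≤ wInner (fun x => m x.1) (-dlap m w B u) u
      + (-⨅ x : {x : V // x ∉ B}, degb m w B x.1) * wInner (fun x => m x.1) u u := by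
  have hinf : (⨅ x : {x : V // x ∉ B}, degb m w B x.1) * wInner (fun x => m x.1) u u
      ≤ ∑ x, degb m w B x.1 * (u x * u x * m x.1) :=
    ciInf_mul_sum_le_sum_mul _ _ fun x => mul_nonneg (mul_self_nonneg _) (hm x.1)
  rw [wInner_neg_dlap]
  linarith

end DirichletLaplacian

theorem stmt_5_general {V : Type*} [Fintype V] [DecidableEq V]
    (m : V → ℝ) (hm : ∀ x, 0 < m x)
    (w : V → V → ℝ)
    (B : Finset V)
    (lam : Fin (Fintype.card {x : V // x ∉ B}) → ℝ) (hlammono : Monotone lam)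
    (hlam : IsEigenBasis (fun x : {x : V // x ∉ B} => m x.1) (dlap m w B) (fun i => -(lam i)))
    (μΩ : Fin (Fintype.card {x : V // x ∉ B}) → ℝ) (hμΩmono : Monotone μΩ)
    (hμΩ : IsEigenBasis (fun x : {x : V // x ∉ B} => m x.1) (olap m w B) (fun i => -(μΩ i)))
    :
    ∀ i : Fin (Fintype.card {x : V // x ∉ B}),
      μΩ i + (⨅ x : {x : V // x ∉ B}, degb m w B x.1) ≤ lam i ∧ lam i ≤ μΩ i + (⨆ x : {x : V // x ∉ B}, degb m w B x.1) := by
  intro i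
  have hm₀ : ∀ x, 0 ≤ m x := fun x => (hm x).le
  have upper := le_add_of_wInner_neg_le (dlapLin m w B) (olapLin m w B) hlammono hμΩmono hlam hμΩ
    (wInner_neg_dlap_le w B hm₀) i
  have lower := le_add_of_wInner_neg_le (olapLin m w B) (dlapLin m w B) hμΩmono hlammono hμΩ hlam
    (wInner_neg_olap_le w B hm₀) i
  exact ⟨by linarith, by linarith⟩

theorem stmt_5 {V : Type*} [Fintype V] [DecidableEq V]
    (G : SimpleGraph V) (hconn : G.Connected)
    (m : V → ℝ) (hm : ∀ x, 0 < m x)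
    (w : V → V → ℝ) (hwsymm : ∀ x y, w x y = w y x)
    (hwpos : ∀ x y, G.Adj x y → 0 < w x y)
    (hw0 : ∀ x y, ¬ G.Adj x y → w x y = 0)
    (B : Finset V) (hB : B.Nonempty)
    (hBB : ∀ x ∈ B, ∀ y ∈ B, ¬ G.Adj x y)
    (hBint : ∀ x ∈ B, ∃ y, y ∉ B ∧ G.Adj x y)
    (lam : Fin (Fintype.card {x : V // x ∉ B}) → ℝ) (hlammono : Monotone lam)
    (hlam : IsEigenBasis (fun x : {x : V // x ∉ B} => m x.1) (dlap m w B) (fun i => -(lam i)))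
    (μΩ : Fin (Fintype.card {x : V // x ∉ B}) → ℝ) (hμΩmono : Monotone μΩ)
    (hμΩ : IsEigenBasis (fun x : {x : V // x ∉ B} => m x.1) (olap m w B) (fun i => -(μΩ i)))
    :
    ∀ i : Fin (Fintype.card {x : V // x ∉ B}),
      μΩ i + (⨅ x : {x : V // x ∉ B}, degb m w B x.1) ≤ lam i ∧ lam i ≤ μΩ i + (⨆ x : {x : V // x ∉ B}, degb m w B x.1) :=
  stmt_5_general m hm w B lam hlammono hlam μΩ hμΩmono hμΩ
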